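/- arXiv:1809.03553 — 4 statements merged into one kernel-verified Lean document; each statement's English description precedes it below -/
import Mathlib

section
/- Let Y be a random variable on a finite set 𝒴 with distribution P, and let S ⊆ 𝒴 with |S| = ℓ. Then Pr[Y ∈ S] ≤ E[min(1, ℓ / |{y' ∈ 𝒴 : P(y') ≥ P(Y)}|)]. -/
open Finset MeasureTheory Set

/-!
Layer cake: writing `P y = ∫ t in Ioi 0, 𝟙[t < P y]`, it suffices to compare both sides on each
superlevel set `B = {y | t < P y}`. There `#(S ∩ B) ≤ min #B ℓ`, and since `B` is an upper set,
every `y ∈ B` has at most `#B` points `y'` with `P y ≤ P y'`, so each weight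
`min 1 (ℓ / #{y' | P y ≤ P y'})` is at least `min 1 (ℓ / #B)`.
-/

theorem integral_Ioi_sum_filter_lt {ι : Type*} (s : Finset ι) (a w : ι → ℝ)
    (ha : ∀ i ∈ s, 0 ≤ a i) :
    ∫ t in Ioi 0, ∑ i ∈ s with t < a i, w i = ∑ i ∈ s, a i * w i := by
  have hind : ∀ t, ∑ i ∈ s with t < a i, w i = ∑ i ∈ s, (Iio (a i)).indicator (fun _ => w i) t :=
    fun t => by simp only [sum_filter, indicator_apply, Set.mem_Iio]
  have hint : ∀ i ∈ s, Integrable ((Iio (a i)).indicator fun _ => w i) (volume.restrict (Ioi 0)) :=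
    fun i _ => by
      rw [integrable_indicator_iff measurableSet_Iio]
      exact integrableOn_const (by simp [Measure.restrict_apply measurableSet_Iio, Iio_inter_Ioi])
  simp_rw [hind]
  rw [integral_finsetSum s hint]
  refine sum_congr rfl fun i hi => ?_
  rw [setIntegral_indicator measurableSet_Iio, Ioi_inter_Iio, setIntegral_const,
    Real.volume_real_Ioo_of_le (ha i hi), sub_zero, smul_eq_mul]

theorem sum_mul_le_sum_mul_of_sum_filter_lt_le {ι : Type*} (s : Finset ι) {a w v : ι → ℝ}
    (ha : ∀ i ∈ s, 0 ≤ a i)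
    (h : ∀ t, 0 < t → ∑ i ∈ s with t < a i, w i ≤ ∑ i ∈ s with t < a i, v i) :
    ∑ i ∈ s, a i * w i ≤ ∑ i ∈ s, a i * v i := by
  have hdiff : 0 ≤ ∫ t in Ioi 0, ∑ i ∈ s with t < a i, (v i - w i) :=
    setIntegral_nonneg measurableSet_Ioi fun t ht => by
      rw [sum_sub_distrib]; exact sub_nonneg.mpr (h t ht)
  rw [integral_Ioi_sum_filter_lt s a _ ha] at hdiff
  simpa only [mul_sub, sum_sub_distrib, sub_nonneg] using hdiff

theorem min_card_le_sum_min_one_div {ι : Type*} (B : Finset ι) {ℓ : ℝ} (hℓ : 0 ≤ ℓ) {N : ι → ℝ}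
    (hN : ∀ y ∈ B, 0 < N y ∧ N y ≤ #B) :
    min (#B : ℝ) ℓ ≤ ∑ y ∈ B, min 1 (ℓ / N y) := by
  rcases B.eq_empty_or_nonempty with rfl | hB
  · simp [hℓ]
  have hBpos : (0 : ℝ) < #B := by exact_mod_cast hB.card_pos
  calc min (#B : ℝ) ℓ = #B • min 1 (ℓ / #B) := by
        rw [nsmul_eq_mul, mul_min_of_nonneg _ _ hBpos.le, mul_one, mul_div_cancel₀ _ hBpos.ne']
    _ ≤ ∑ y ∈ B, min 1 (ℓ / N y) := card_nsmul_le_sum B _ _ fun y hy =>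
        min_le_min_left 1 (div_le_div_of_nonneg_left hℓ (hN y hy).1 (hN y hy).2)

theorem card_filter_lt_le_sum_min_one_div {ι : Type*} [Fintype ι] (P : ι → ℝ) (S : Finset ι)
    (t : ℝ) :
    (#{y ∈ S | t < P y} : ℝ) ≤ ∑ y with t < P y, min 1 ((#S : ℝ) / #{y' | P y ≤ P y'}) := by
  set B : Finset ι := {y | t < P y}
  have hSB : #{y ∈ S | t < P y} ≤ min #B #S :=
    le_min (card_le_card fun y hy => by simp_all [B]) (card_le_card (filter_subset _ _))
  refine le_trans ?_ (min_card_le_sum_min_one_div B (Nat.cast_nonneg _) fun y hy => ⟨?_, ?_⟩)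
  · exact_mod_cast hSB
  · exact_mod_cast card_pos.mpr ⟨y, by simp⟩
  · have hy : t < P y := by simpa [B] using hy
    exact_mod_cast Finset.card_le_card fun y' hy' => by
      simp only [B, Finset.mem_filter, Finset.mem_univ, true_and] at hy' ⊢; exact hy.trans_le hy'

theorem stmt_4_general {𝒴 : Type*} [Fintype 𝒴] (P : 𝒴 → ℝ)
    (hP0 : ∀ y, 0 ≤ P y)
    (S : Finset 𝒴) (ℓ : ℕ) (hS : S.card = ℓ) :
    ∑ y ∈ S, P y ≤
      ∑ y, P y * min 1 ((ℓ : ℝ) / (Finset.univ.filter fun y' => P y ≤ P y').card) := by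
  classical
  subst hS
  have hmass : ∑ y ∈ S, P y = ∑ y, P y * if y ∈ S then 1 else 0 := by
    simp [mul_ite, sum_ite_mem]
  rw [hmass]
  refine sum_mul_le_sum_mul_of_sum_filter_lt_le univ (fun y _ => hP0 y) fun t _ => ?_
  convert card_filter_lt_le_sum_min_one_div P S t using 3
  rw [sum_boole, filter_filter, Nat.cast_inj]
  exact congrArg card (by ext; simp [and_comm])

theorem stmt_4 {𝒴 : Type*} [Fintype 𝒴] [DecidableEq 𝒴] (P : 𝒴 → ℝ)
    (hP0 : ∀ y, 0 ≤ P y) (hP1 : ∑ y, P y = 1)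
    (S : Finset 𝒴) (ℓ : ℕ) (hS : S.card = ℓ) :
    ∑ y ∈ S, P y ≤
      ∑ y, P y * min 1 ((ℓ : ℝ) / (Finset.univ.filter fun y' => P y ≤ P y').card) :=
  stmt_4_general P hP0 S ℓ hS
end

section
/- Let μ* be a bijection between two n-element sets 𝒰_a and 𝒰_b, and let ℳ(μ*, d) be the set of μ*-maximal matchings μ ⊆ 𝒰_a × 𝒰_b with |μ \ μ*| = d. Then |ℳ(μ*, d)| ≤ n^{2d}/d!. -/
/-!
A `μ*`-maximal matching `μ` is determined by its `d` pairs outside `μ*`: the pairs of `μ`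
inside `μ*` are exactly those pairs of `μ*` that meet neither support of `μ \ μ*`. Hence
`|ℳ(μ*, d)|` is at most the number `C(n², d)` of `d`-element sets of pairs, and
`C(n², d) ≤ n^{2d}/d!`.
-/

/-- A binary relation in which every left element and every right element
appears in at most one pair. -/
def IsMatchingRel {α β : Type*} (μ : Set (α × β)) : Prop :=
  ∀ p ∈ μ, ∀ q ∈ μ, (p.1 = q.1 ∨ p.2 = q.2) → p = q

/-- `μ` is `μ*`-maximal: no pair of `μ*` can be added to `μ` without destroying
the matching property. -/
def IsMuStarMaximal {α β : Type*} (μstar μ : Set (α × β)) : Prop :=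
  ∀ p ∈ μstar, p.1 ∈ Prod.fst '' μ ∨ p.2 ∈ Prod.snd '' μ

theorem Nat.card_setOfCard_eq_choose (γ : Type*) [Fintype γ] (d : ℕ) :
    Nat.card {s : Set γ // Nat.card s = d} = (Fintype.card γ).choose d := by
  classical
  rw [← Fintype.card_finset_len, ← Nat.card_eq_fintype_card]
  exact Nat.card_congr <| (Fintype.finsetEquivSet.subtypeEquiv fun s => by
    simp [Fintype.finsetEquivSet_apply]).symm

section

variable {α β : Type*}

theorem Equiv.isMatchingRel_graph (e : α ≃ β) : IsMatchingRel {p : α × β | e p.1 = p.2} := by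
  rintro p (hp : e p.1 = p.2) q (hq : e q.1 = q.2) (h | h)
  · exact Prod.ext h (by rw [← hp, ← hq, h])
  · exact Prod.ext (e.injective (by rw [hp, hq, h])) h

theorem IsMatchingRel.eq_diff_union_of_isMuStarMaximal {μstar μ : Set (α × β)} (hstar : IsMatchingRel μstar)
    (hμ : IsMatchingRel μ) (hmax : IsMuStarMaximal μstar μ) :
    μ = μ \ μstar ∪ {p ∈ μstar | p.1 ∉ Prod.fst '' (μ \ μstar) ∧
      p.2 ∉ Prod.snd '' (μ \ μstar)} := by
  ext p
  constructor
  · intro hp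
    by_cases hps : p ∈ μstar
    · refine Or.inr ⟨hps, ?_, ?_⟩ <;> rintro ⟨q, hq, hqp⟩
      · exact hq.2 (hμ q hq.1 p hp (Or.inl hqp) ▸ hps)
      · exact hq.2 (hμ q hq.1 p hp (Or.inr hqp) ▸ hps)
    · exact Or.inl ⟨hp, hps⟩
  · rintro (hp | ⟨hps, hfst, hsnd⟩)
    · exact hp.1
    · obtain ⟨q, hq, hqp⟩ : ∃ q ∈ μ, q.1 = p.1 ∨ q.2 = p.2 := by
        rcases hmax p hps with ⟨q, hq, hqp⟩ | ⟨q, hq, hqp⟩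
        exacts [⟨q, hq, Or.inl hqp⟩, ⟨q, hq, Or.inr hqp⟩]
      by_cases hqs : q ∈ μstar
      · exact hstar q hqs p hps hqp ▸ hq
      · rcases hqp with hqp | hqp
        exacts [(hfst ⟨q, ⟨hq, hqs⟩, hqp⟩).elim, (hsnd ⟨q, ⟨hq, hqs⟩, hqp⟩).elim]

theorem card_muStarMaximal_le_choose [Fintype α] [Fintype β] {μstar : Set (α × β)}
    (hstar : IsMatchingRel μstar) (d : ℕ) :
    Nat.card {μ : Set (α × β) // IsMatchingRel μ ∧ IsMuStarMaximal μstar μ ∧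
      Nat.card ↥(μ \ μstar) = d} ≤ (Fintype.card (α × β)).choose d := by
  rw [← Nat.card_setOfCard_eq_choose]
  refine Nat.card_le_card_of_injective (fun μ => ⟨μ.1 \ μstar, μ.2.2.2⟩) ?_
  intro μ ν h
  have hdiff : μ.1 \ μstar = ν.1 \ μstar := congrArg Subtype.val h
  rw [Subtype.ext_iff, hstar.eq_diff_union_of_isMuStarMaximal μ.2.1 μ.2.2.1,
    hstar.eq_diff_union_of_isMuStarMaximal ν.2.1 ν.2.2.1, hdiff]

end

/-- `|ℳ(μ*, d)| ≤ n^{2d}/d!`. -/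
theorem stmt_10 {α β : Type*} [Fintype α] [Fintype β] (n : ℕ)
    (hα : Fintype.card α = n) (hβ : Fintype.card β = n)
    (e : α ≃ β) (d : ℕ) :
    (Nat.card {μ : Set (α × β) // IsMatchingRel μ ∧
        IsMuStarMaximal {p : α × β | e p.1 = p.2} μ ∧
        Nat.card ↥(μ \ {p : α × β | e p.1 = p.2}) = d} : ℝ) ≤
      (n : ℝ) ^ (2 * d) / (Nat.factorial d) := by
  have hcard : Fintype.card (α × β) = n ^ 2 := by rw [Fintype.card_prod, hα, hβ, sq]
  calc _ ≤ ((Fintype.card (α × β)).choose d : ℝ) := by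
        exact_mod_cast card_muStarMaximal_le_choose e.isMatchingRel_graph d
    _ ≤ ((Fintype.card (α × β) : ℕ) : ℝ) ^ d / d.factorial := Nat.choose_le_pow_div d _
    _ = (n : ℝ) ^ (2 * d) / d.factorial := by rw [hcard]; push_cast; ring
end

section
/- For f ∈ {0,1}^ℓ, let k1(f) be the number of ones in f, k11(f) the number of indices i with f(i) = f(i+1) = 1 (0 ≤ i < ℓ−1), and k11°(f) the analogous count with indices taken cyclically modulo ℓ. Define b_ℓ(x,y) = Σ_f x^{k1(f)} y^{k11(f)} and b_ℓ°(x,y) = Σ_f x^{k1(f)} y^{k11°(f)}. Then for all ℓ ≥ 1, x ≥ 0, y ≥ 1: b_ℓ(x,y)² ≤ b_2°(x,y)^ℓ. -/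
open Finset

/-- Number of ones in `f`. -/
def k1 {ℓ : ℕ} (f : Fin ℓ → Bool) : ℕ :=
  (Finset.univ.filter fun i => f i = true).card

/-- Number of linearly adjacent pairs of ones in `f`. -/
def k11 {ℓ : ℕ} (f : Fin ℓ → Bool) : ℕ :=
  (Finset.univ.filter fun i : Fin ℓ =>
    (i : ℕ) + 1 < ℓ ∧ f i = true ∧ f (finRotate ℓ i) = true).card

/-- Number of cyclically adjacent pairs of ones in `f`. -/
def k11c {ℓ : ℕ} (f : Fin ℓ → Bool) : ℕ :=
  (Finset.univ.filter fun i : Fin ℓ => f i = true ∧ f (finRotate ℓ i) = true).card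

/-- Path generating function `b_ℓ(x,y)`. -/
def bPath (ℓ : ℕ) (x y : ℝ) : ℝ :=
  ∑ f : Fin ℓ → Bool, x ^ k1 f * y ^ k11 f

/-- Cycle generating function `b_ℓ°(x,y)`. -/
def bCyc (ℓ : ℕ) (x y : ℝ) : ℝ :=
  ∑ f : Fin ℓ → Bool, x ^ k1 f * y ^ k11c f

/-! Transfer matrix: let `P_n`, `R_n` (`bPathAfter false n`, `bPathAfter true n`) be `b_n`
computed as if the string were preceded by a `0`, resp. by a `1` (without its `x`). Prepending
a bit gives `P_{n+1} = P_n + x R_n` and `R_{n+1} = P_n + x y R_n`. In the coordinates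
`(P, √x R)` this is the symmetric matrix `[[1, √x], [√x, x y]]`, whose squared Frobenius norm is
`1 + 2x + x²y² = b_2°`, so the form `P² + x R²` grows at most by the factor `b_2°` per step,
starting from `1 + x`. Cauchy–Schwarz on `b_{n+1} = P_n + x R_n` then gives
`b_{n+1}² ≤ (1 + x)² (b_2°)ⁿ`, and `(1 + x)² ≤ b_2°` as `y ≥ 1`. -/

lemma k1_cons {n : ℕ} (b : Bool) (g : Fin n → Bool) :
    k1 (Fin.cons b g : Fin (n + 1) → Bool) = b.toNat + k1 g := by
  simp only [k1, card_filter, Fin.sum_univ_succ, Fin.cons_zero, Fin.cons_succ]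
  cases b <;> rfl

lemma k11_eq_card {n : ℕ} (f : Fin (n + 1) → Bool) :
    k11 f = #{i : Fin n | f i.castSucc = true ∧ f i.succ = true} := by
  rw [k11, card_filter, card_filter, Fin.sum_univ_castSucc]
  simp

lemma k11_cons {n : ℕ} (b : Bool) (g : Fin (n + 1) → Bool) :
    k11 (Fin.cons b g : Fin (n + 2) → Bool) = (b && g 0).toNat + k11 g := by
  simp only [k11_eq_card, card_filter, Fin.sum_univ_succ (n := n), Fin.cons_zero, Fin.cons_succ,
    Fin.castSucc_zero, Fin.castSucc_succ]
  cases b <;> cases g 0 <;> rfl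

lemma k11_cons_false {n : ℕ} (g : Fin n → Bool) :
    k11 (Fin.cons false g : Fin (n + 1) → Bool) = k11 g := by
  cases n with
  | zero => simp [k11]
  | succ n => simp [k11_cons]

/-- `b_n` for strings preceded by the bit `b`, whose `x` is not counted. -/
noncomputable def bPathAfter (b : Bool) (n : ℕ) (x y : ℝ) : ℝ :=
  ∑ g : Fin n → Bool, x ^ k1 g * y ^ k11 (Fin.cons b g : Fin (n + 1) → Bool)

lemma bPathAfter_zero (b : Bool) (x y : ℝ) : bPathAfter b 0 x y = 1 := by
  simp [bPathAfter, k1, k11]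

lemma bPathAfter_succ (b : Bool) (n : ℕ) (x y : ℝ) :
    bPathAfter b (n + 1) x y =
      bPathAfter false n x y + x * (if b then y else 1) * bPathAfter true n x y := by
  rw [bPathAfter, ← (Fin.consEquiv fun _ => Bool).sum_comp, Fintype.sum_prod_type,
    Fintype.sum_bool, add_comm]
  cases b <;>
    simp [Fin.consEquiv, bPathAfter, k1_cons, k11_cons, pow_add, mul_sum, mul_assoc, mul_left_comm]

lemma bPath_eq_bPathAfter_false (n : ℕ) (x y : ℝ) : bPath n x y = bPathAfter false n x y := by
  simp only [bPath, bPathAfter, k11_cons_false]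

lemma bPath_succ (n : ℕ) (x y : ℝ) :
    bPath (n + 1) x y = bPathAfter false n x y + x * bPathAfter true n x y := by
  simp [bPath_eq_bPathAfter_false, bPathAfter_succ]

lemma k1_k11c_pair (a b : Bool) :
    k1 ![a, b] = a.toNat + b.toNat ∧ k11c ![a, b] = 2 * (a && b).toNat := by
  revert a b
  decide

lemma bCyc_two (x y : ℝ) : bCyc 2 x y = 1 + 2 * x + x ^ 2 * y ^ 2 := by
  rw [bCyc, ← (piFinTwoEquiv fun _ => Bool).symm.sum_comp]
  simp [Fintype.sum_prod_type, k1_k11c_pair]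
  ring

lemma transfer_quadForm_le {x : ℝ} (hx : 0 ≤ x) (y P R : ℝ) :
    (P + x * R) ^ 2 + x * (P + x * y * R) ^ 2 ≤
      (1 + 2 * x + x ^ 2 * y ^ 2) * (P ^ 2 + x * R ^ 2) := by
  nlinarith [mul_nonneg hx (sq_nonneg (P - R)), mul_nonneg (sq_nonneg x) (sq_nonneg (y * P - R))]

lemma sq_add_mul_le_quadForm {x : ℝ} (hx : 0 ≤ x) (P R : ℝ) :
    (P + x * R) ^ 2 ≤ (1 + x) * (P ^ 2 + x * R ^ 2) := by
  nlinarith [mul_nonneg hx (sq_nonneg (P - R))]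

lemma bPathAfter_quadForm_le {x : ℝ} (hx : 0 ≤ x) (y : ℝ) (n : ℕ) :
    bPathAfter false n x y ^ 2 + x * bPathAfter true n x y ^ 2 ≤
      (1 + x) * (1 + 2 * x + x ^ 2 * y ^ 2) ^ n := by
  induction n with
  | zero => simp [bPathAfter_zero]
  | succ n ih =>
    simp only [bPathAfter_succ, if_true, Bool.false_eq_true, if_false, mul_one]
    calc _ ≤ (1 + 2 * x + x ^ 2 * y ^ 2) *
            (bPathAfter false n x y ^ 2 + x * bPathAfter true n x y ^ 2) :=
          transfer_quadForm_le hx y _ _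
      _ ≤ (1 + 2 * x + x ^ 2 * y ^ 2) * ((1 + x) * (1 + 2 * x + x ^ 2 * y ^ 2) ^ n) := by
          gcongr
      _ = (1 + x) * (1 + 2 * x + x ^ 2 * y ^ 2) ^ (n + 1) := by ring

theorem stmt_14_general (ℓ : ℕ) (x y : ℝ) (hx : 0 ≤ x) (hy : 1 ≤ y) :
    (bPath ℓ x y) ^ 2 ≤ (bCyc 2 x y) ^ ℓ := by
  rw [bCyc_two]
  cases ℓ with
  | zero => simp [bPath_eq_bPathAfter_false, bPathAfter_zero]
  | succ n =>
    have hB : (1 + x) ^ 2 ≤ 1 + 2 * x + x ^ 2 * y ^ 2 := by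
      nlinarith [le_mul_of_one_le_right (sq_nonneg x) (one_le_pow₀ hy : 1 ≤ y ^ 2)]
    set B := 1 + 2 * x + x ^ 2 * y ^ 2
    calc bPath (n + 1) x y ^ 2
        ≤ (1 + x) * (bPathAfter false n x y ^ 2 + x * bPathAfter true n x y ^ 2) := by
          rw [bPath_succ]
          exact sq_add_mul_le_quadForm hx _ _
      _ ≤ (1 + x) * ((1 + x) * B ^ n) := by gcongr; exact bPathAfter_quadForm_le hx y n
      _ = (1 + x) ^ 2 * B ^ n := by ring
      _ ≤ B * B ^ n := by gcongr
      _ = B ^ (n + 1) := by ring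

/-- `b_ℓ(x,y)² ≤ b_2°(x,y)^ℓ` for `ℓ ≥ 1`, `x ≥ 0`, `y ≥ 1`. -/
theorem stmt_14 (ℓ : ℕ) (hℓ : 1 ≤ ℓ) (x y : ℝ) (hx : 0 ≤ x) (hy : 1 ≤ y) :
    (bPath ℓ x y) ^ 2 ≤ (bCyc 2 x y) ^ ℓ :=
  stmt_14_general ℓ x y hx hy
end

section
/- With p a 2×2 probability matrix, p1* = p10+p11, p*1 = p01+p11, and z ≥ 1: (1 + 2·p1*·p*1·(z−1) + p11²(z−1)²)² ≤ exp(2·p1*·p*1·(z²−1) + p11²(z²−1)²). -/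
/-! Since `1 + t ≤ exp t` for `t ≥ 0`, it suffices to compare exponents. Doubling the linear
term uses `2 (z - 1) ≤ z² - 1`, and the quadratic term only grows because
`2 (z - 1)² ≤ (z² - 1)² = (z - 1)² (z + 1)²` for `z ≥ 1`. -/

namespace Real

theorem sq_one_add_le_exp_two_mul {t : ℝ} (ht : -1 ≤ t) : (1 + t) ^ 2 ≤ exp (2 * t) := by
  calc (1 + t) ^ 2 ≤ exp t ^ 2 := pow_le_pow_left₀ (by linarith) (by linarith [add_one_le_exp t]) 2
    _ = exp (2 * t) := by rw [sq, ← exp_add, two_mul]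

end Real

theorem two_mul_quadratic_sub_one_le {a b z : ℝ} (ha : 0 ≤ a) (hb : 0 ≤ b) (hz : 1 ≤ z) :
    2 * (2 * a * (z - 1) + b * (z - 1) ^ 2) ≤ 2 * a * (z ^ 2 - 1) + b * (z ^ 2 - 1) ^ 2 := by
  have key : 2 * a * (z ^ 2 - 1) + b * (z ^ 2 - 1) ^ 2 - 2 * (2 * a * (z - 1) + b * (z - 1) ^ 2)
      = (z - 1) ^ 2 * (2 * a + b * ((z + 1) ^ 2 - 2)) := by ring
  have : 0 ≤ (z - 1) ^ 2 * (2 * a + b * ((z + 1) ^ 2 - 2)) := by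
    apply mul_nonneg (sq_nonneg _)
    nlinarith
  linarith

theorem sq_one_add_quadratic_le_exp {a b z : ℝ} (ha : 0 ≤ a) (hb : 0 ≤ b) (hz : 1 ≤ z) :
    (1 + 2 * a * (z - 1) + b * (z - 1) ^ 2) ^ 2 ≤
      Real.exp (2 * a * (z ^ 2 - 1) + b * (z ^ 2 - 1) ^ 2) := by
  have ht : 0 ≤ 2 * a * (z - 1) + b * (z - 1) ^ 2 := by
    have : 0 ≤ z - 1 := by linarith
    positivity
  calc (1 + 2 * a * (z - 1) + b * (z - 1) ^ 2) ^ 2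
      = (1 + (2 * a * (z - 1) + b * (z - 1) ^ 2)) ^ 2 := by ring
    _ ≤ Real.exp (2 * (2 * a * (z - 1) + b * (z - 1) ^ 2)) :=
      Real.sq_one_add_le_exp_two_mul (by linarith)
    _ ≤ Real.exp (2 * a * (z ^ 2 - 1) + b * (z ^ 2 - 1) ^ 2) :=
      Real.exp_le_exp.mpr (two_mul_quadratic_sub_one_le ha hb hz)

theorem stmt_17_general (p01 p10 p11 z : ℝ)
    (h01 : 0 ≤ p01) (h10 : 0 ≤ p10) (h11 : 0 ≤ p11)
    (hz : 1 ≤ z) :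
    (1 + 2 * ((p10 + p11) * (p01 + p11)) * (z - 1) + p11 ^ 2 * (z - 1) ^ 2) ^ 2 ≤
      Real.exp (2 * ((p10 + p11) * (p01 + p11)) * (z ^ 2 - 1) +
        p11 ^ 2 * (z ^ 2 - 1) ^ 2) :=
  sq_one_add_quadratic_le_exp (by positivity) (sq_nonneg p11) hz

theorem stmt_17 (p00 p01 p10 p11 z : ℝ)
    (h00 : 0 ≤ p00) (h01 : 0 ≤ p01) (h10 : 0 ≤ p10) (h11 : 0 ≤ p11)
    (hsum : p00 + p01 + p10 + p11 = 1) (hz : 1 ≤ z) :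
    (1 + 2 * ((p10 + p11) * (p01 + p11)) * (z - 1) + p11 ^ 2 * (z - 1) ^ 2) ^ 2 ≤
      Real.exp (2 * ((p10 + p11) * (p01 + p11)) * (z ^ 2 - 1) +
        p11 ^ 2 * (z ^ 2 - 1) ^ 2) :=
  stmt_17_general p01 p10 p11 z h01 h10 h11 hz
end
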